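/- For each integer 1 ≤ k ≤ t−1, the numbers a1(−t+2k, t) and a2(−t+2k, t) are the coefficients at z^{t−k−1} and z^{t−k} respectively in the expansion of the polynomial 2^{(1−t)/2}·(1+z)^{t−k−1}·(1−z)^{k−1}. -/
import Mathlib


open scoped BigOperators

noncomputable section

/-- Endpoint `x`-coordinate of a checker path of `n` steps encoded by step directions:
`true` = step `(1,1)`, `false` = step `(-1,1)`. -/
def endpt {n : ℕ} (d : Fin n → Bool) : ℤ :=
  ∑ i, (if d i then (1 : ℤ) else -1)

/-- The number of turns of a checker path encoded by step directions. -/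
def turns {n : ℕ} (d : Fin n → Bool) : ℕ :=
  ((Finset.range n).filter fun i =>
    ∃ h : i + 1 < n, d ⟨i, Nat.lt_of_succ_lt h⟩ ≠ d ⟨i + 1, h⟩).card

/-- Checker paths from `(0,0)` to `(x,n)` with the first step to `(1,1)`,
encoded by their step directions. -/
def pathsTo (x : ℤ) (n : ℕ) : Finset (Fin n → Bool) :=
  Finset.univ.filter fun d => (∃ h : 0 < n, d ⟨0, h⟩ = true) ∧ endpt d = x

/-- Feynman checkers with mass `m` and lattice step `ε`: the value `a(εx, εt, m, ε)`,
where `x t : ℤ` are the coordinates in units of `ε`. -/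
def am (x t : ℤ) (m ε : ℝ) : ℂ :=
  (1 + m ^ 2 * ε ^ 2 : ℂ) ^ ((1 - (t : ℂ)) / 2) * Complex.I *
    ∑ d ∈ pathsTo x t.toNat, (-Complex.I * (m * ε)) ^ turns d

/-- The basic model: `a(x,t)`. -/
def a (x t : ℤ) : ℂ :=
  (2 : ℂ) ^ ((1 - (t : ℂ)) / 2) * Complex.I *
    ∑ d ∈ pathsTo x t.toNat, (-Complex.I) ^ turns d

lemma snoc_lt {n : ℕ} (d : Fin n → Bool) (b : Bool) (i : ℕ) (h : i < n) (h' : i < n + 1) :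
    (Fin.snoc d b : Fin (n+1) → Bool) ⟨i, h'⟩ = d ⟨i, h⟩ := by
  simp [Fin.snoc, h]

lemma snoc_top {n : ℕ} (d : Fin n → Bool) (b : Bool) (h : n < n + 1) :
    (Fin.snoc d b : Fin (n+1) → Bool) ⟨n, h⟩ = b := by
  simp [Fin.snoc]

lemma turns_cast {n : ℕ} (d : Fin n → Bool) :
    turns d = ∑ i ∈ Finset.range n, (if ∃ h : i + 1 < n, d ⟨i, Nat.lt_of_succ_lt h⟩ ≠ d ⟨i + 1, h⟩ then 1 else 0) := by
  rw [turns, Finset.card_filter]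

lemma turns_snoc {n : ℕ} (hn : 0 < n) (d : Fin n → Bool) (b : Bool) :
    turns (Fin.snoc d b : Fin (n+1) → Bool)
      = turns d + (if d ⟨n-1, Nat.sub_lt hn one_pos⟩ = b then 0 else 1) := by
  obtain ⟨m, rfl⟩ : ∃ m, n = m + 1 := ⟨n - 1, by omega⟩
  rw [turns_cast, turns_cast, Finset.sum_range_succ, Finset.sum_range_succ,
    Finset.sum_range_succ]
  have h1 : ∀ i ∈ Finset.range m,
      (if ∃ h : i + 1 < m + 1 + 1, (Fin.snoc d b : Fin (m+2) → Bool) ⟨i, Nat.lt_of_succ_lt h⟩ ≠ (Fin.snoc d b : Fin (m+2) → Bool) ⟨i + 1, h⟩ then (1:ℕ) else 0)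
      = (if ∃ h : i + 1 < m + 1, d ⟨i, Nat.lt_of_succ_lt h⟩ ≠ d ⟨i + 1, h⟩ then 1 else 0) := by
    intro i hi
    rw [Finset.mem_range] at hi
    refine if_congr ?_ rfl rfl
    constructor
    · rintro ⟨h, hq⟩
      rw [snoc_lt d b i (by omega), snoc_lt d b (i+1) (by omega)] at hq
      exact ⟨by omega, hq⟩
    · rintro ⟨h, hq⟩
      refine ⟨by omega, ?_⟩
      rw [snoc_lt d b i (by omega), snoc_lt d b (i+1) (by omega)]
      exact hq
  rw [Finset.sum_congr rfl h1]
  have h2 : (if ∃ h : m + 1 + 1 < m + 1 + 1, (Fin.snoc d b : Fin (m+2) → Bool) ⟨m+1, Nat.lt_of_succ_lt h⟩ ≠ (Fin.snoc d b : Fin (m+2) → Bool) ⟨m+1+1, h⟩ then (1:ℕ) else 0) = 0 := by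
    rw [if_neg]; rintro ⟨h, -⟩; omega
  have h3 : (if ∃ h : m + 1 < m + 1, d ⟨m, Nat.lt_of_succ_lt h⟩ ≠ d ⟨m + 1, h⟩ then (1:ℕ) else 0) = 0 := by
    rw [if_neg]; rintro ⟨h, -⟩; omega
  have h4 : (if ∃ h : m + 1 < m + 1 + 1, (Fin.snoc d b : Fin (m+2) → Bool) ⟨m, Nat.lt_of_succ_lt h⟩ ≠ (Fin.snoc d b : Fin (m+2) → Bool) ⟨m+1, h⟩ then (1:ℕ) else 0)
      = (if d ⟨m + 1 - 1, Nat.sub_lt hn one_pos⟩ = b then 0 else 1) := by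
    by_cases hd : d ⟨m + 1 - 1, Nat.sub_lt hn one_pos⟩ = b
    · rw [if_neg, if_pos hd]
      rintro ⟨h, hq⟩
      rw [snoc_lt d b m (by omega), snoc_top] at hq
      exact hq hd
    · rw [if_pos, if_neg hd]
      refine ⟨by omega, ?_⟩
      rw [snoc_lt d b m (by omega), snoc_top]
      exact hd
  rw [h2, h3, h4]
  ring

lemma endpt_snoc {n : ℕ} (d : Fin n → Bool) (b : Bool) :
    endpt (Fin.snoc d b : Fin (n+1) → Bool) = endpt d + (if b then 1 else -1) := by
  simp [endpt, Fin.sum_univ_castSucc]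

/-- Sum of `(-I)^turns` over paths to `(x,n)` with last step `b`. -/
def Af (b : Bool) (x : ℤ) (n : ℕ) : ℂ :=
  ∑ d ∈ (pathsTo x n).filter
      (fun d => ∃ h : 0 < n, d ⟨n - 1, Nat.sub_lt h one_pos⟩ = b),
    (-Complex.I) ^ turns d

lemma snoc_zero {n : ℕ} (hn : 0 < n) (d : Fin n → Bool) (b : Bool) (h : 0 < n + 1) :
    (Fin.snoc d b : Fin (n+1) → Bool) ⟨0, h⟩ = d ⟨0, hn⟩ :=
  snoc_lt d b 0 hn h

lemma mem_pathsTo {x : ℤ} {n : ℕ} {d : Fin n → Bool} :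
    d ∈ pathsTo x n ↔ (∃ h : 0 < n, d ⟨0, h⟩ = true) ∧ endpt d = x := by
  simp [pathsTo]

lemma snoc_mem_iff {x : ℤ} {n : ℕ} (hn : 0 < n) (d : Fin n → Bool) (b : Bool) :
    (Fin.snoc d b : Fin (n+1) → Bool) ∈ pathsTo x (n+1)
      ↔ d ∈ pathsTo (x - (if b then 1 else -1)) n := by
  rw [mem_pathsTo, mem_pathsTo, endpt_snoc]
  constructor
  · rintro ⟨⟨h0, hfirst⟩, hend⟩
    rw [snoc_zero hn] at hfirst
    exact ⟨⟨hn, hfirst⟩, by omega⟩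
  · rintro ⟨⟨h0, hfirst⟩, hend⟩
    exact ⟨⟨by omega, (snoc_zero hn d b (by omega)).trans hfirst⟩, by omega⟩

lemma snoc_last_val {n : ℕ} (d : Fin n → Bool) (b : Bool) (h : 0 < n + 1) :
    (Fin.snoc d b : Fin (n+1) → Bool) ⟨n + 1 - 1, Nat.sub_lt h one_pos⟩ = b :=
  snoc_top d b _

lemma snoc_init_self' {n : ℕ} (d : Fin (n+1) → Bool) (b : Bool)
    (h : d ⟨n + 1 - 1, Nat.sub_lt (Nat.succ_pos n) one_pos⟩ = b) :
    (Fin.snoc (Fin.init d) b : Fin (n+1) → Bool) = d := by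
  have hb : d (Fin.last n) = b := by
    have he : Fin.last n = ⟨n + 1 - 1, Nat.sub_lt (Nat.succ_pos n) one_pos⟩ :=
      Fin.ext (by simp)
    rw [he]; exact h
  rw [← hb]
  exact Fin.snoc_init_self d

lemma Af_succ (b : Bool) (x : ℤ) (n : ℕ) (hn : 0 < n) :
    Af b x (n + 1) =
      Af b (x - (if b then 1 else -1)) n
        + (-Complex.I) * Af (!b) (x - (if b then 1 else -1)) n := by
  have key : ∑ d ∈ pathsTo (x - (if b then 1 else -1)) n,
          (-Complex.I) ^ turns d *
            (if d ⟨n - 1, Nat.sub_lt hn one_pos⟩ = b then 1 else -Complex.I)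
      = Af b x (n+1) := by
    rw [Af]
    refine Finset.sum_bij' (fun (d : Fin n → Bool) _ => (Fin.snoc d b : Fin (n+1) → Bool))
      (fun (d : Fin (n+1) → Bool) _ => (Fin.init d : Fin n → Bool)) ?_ ?_ ?_ ?_ ?_
    · intro d hd
      rw [Finset.mem_filter]
      exact ⟨(snoc_mem_iff hn d b).2 hd, ⟨Nat.succ_pos n, snoc_last_val d b (Nat.succ_pos n)⟩⟩
    · intro d hd
      rw [Finset.mem_filter] at hd
      obtain ⟨hmem, hex⟩ := hd
      obtain ⟨hp, hlast⟩ := hex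
      rw [← snoc_init_self' d b hlast] at hmem
      exact (snoc_mem_iff hn _ b).1 hmem
    · intro d hd
      exact Fin.init_snoc (α := fun _ : Fin (n+1) => Bool) b d
    · intro d hd
      rw [Finset.mem_filter] at hd
      obtain ⟨-, hex⟩ := hd
      obtain ⟨hp, hlast⟩ := hex
      exact snoc_init_self' d b hlast
    · intro d hd
      rw [turns_snoc hn]
      by_cases hc : d ⟨n - 1, Nat.sub_lt hn one_pos⟩ = b
      · simp [hc, pow_add]
      · simp [hc, pow_add]
  rw [← key, Af, Af]
  clear key
  rw [← Finset.sum_filter_add_sum_filter_not (pathsTo (x - (if b then 1 else -1)) n)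
    (fun d => ∃ h : 0 < n, d ⟨n - 1, Nat.sub_lt h one_pos⟩ = b)]
  congr 1
  · refine Finset.sum_congr rfl ?_
    intro d hd
    rw [Finset.mem_filter] at hd
    obtain ⟨-, hex⟩ := hd
    obtain ⟨hp, hlast⟩ := hex
    rw [if_pos hlast, mul_one]
  · rw [mul_comm, Finset.sum_mul]
    refine Finset.sum_congr ?_ ?_
    · refine Finset.filter_congr ?_
      intro d hd
      constructor
      · rintro hne
        have hnb : ¬ (d ⟨n - 1, Nat.sub_lt hn one_pos⟩ = b) := fun hc => hne ⟨hn, hc⟩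
        refine ⟨hn, ?_⟩
        cases hb : d ⟨n - 1, Nat.sub_lt hn one_pos⟩ <;> cases b <;> simp_all
      · rintro ⟨hp, hq⟩ hne
        obtain ⟨hp', hq'⟩ := hne
        rw [hq'] at hq
        simp at hq
    · intro d hd
      rw [Finset.mem_filter] at hd
      obtain ⟨-, hex⟩ := hd
      obtain ⟨hp, hq⟩ := hex
      have hnb : ¬ (d ⟨n - 1, Nat.sub_lt hn one_pos⟩ = b) := by
        rw [hq]; cases b <;> simp
      rw [if_neg hnb]

lemma endpt_eq {n : ℕ} (d : Fin n → Bool) :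
    endpt d = 2 * ((Finset.univ.filter fun i => d i = true).card : ℤ) - n := by
  have h : ∀ i : Fin n, (if d i then (1:ℤ) else -1)
      = 2 * (if d i = true then (1:ℤ) else 0) - 1 := by
    intro i; cases hd : d i <;> simp
  rw [endpt, Finset.sum_congr rfl (fun i _ => h i), Finset.sum_sub_distrib,
    ← Finset.mul_sum, Finset.sum_boole, Finset.sum_const, Finset.card_univ,
    Fintype.card_fin]
  ring

lemma pathsTo_eq_empty {k : ℤ} {n : ℕ} (h : k < 1 ∨ (n:ℤ) < k) :
    pathsTo (2*k - n) n = ∅ := by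
  rw [Finset.eq_empty_iff_forall_notMem]
  intro d hd
  rw [mem_pathsTo] at hd
  obtain ⟨⟨h0, hfirst⟩, hend⟩ := hd
  rw [endpt_eq] at hend
  have hk : k = ((Finset.univ.filter fun i => d i = true).card : ℤ) := by omega
  have hub : (Finset.univ.filter fun i => d i = true).card ≤ n := by
    simpa using (Finset.card_filter_le Finset.univ fun i => d i = true)
  have hlb : 0 < (Finset.univ.filter fun i => d i = true).card := by
    rw [Finset.card_pos]
    exact ⟨⟨0, h0⟩, Finset.mem_filter.2 ⟨Finset.mem_univ _, hfirst⟩⟩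
  omega

/-- The auxiliary polynomial `(1+X)^(n-k-1) (1-X)^(k-1)`. -/
def CP (n : ℕ) (k : ℤ) : Polynomial ℝ :=
  (1 + Polynomial.X) ^ ((n:ℤ) - k - 1).toNat * (1 - Polynomial.X) ^ (k - 1).toNat

def tgtA (k : ℤ) (n : ℕ) : ℂ :=
  if k = n then 1 else
    if 1 ≤ k ∧ k ≤ (n:ℤ) - 1 then (((CP n k).coeff ((n:ℤ) - k).toNat : ℝ) : ℂ) else 0

def tgtB (k : ℤ) (n : ℕ) : ℂ :=
  if 1 ≤ k ∧ k ≤ (n:ℤ) - 1 then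
    -Complex.I * (((CP n k).coeff ((n:ℤ) - k - 1).toNat : ℝ) : ℂ) else 0

lemma coeff_one_sub_X_mul (Q : Polynomial ℝ) (m : ℕ) :
    ((1 - Polynomial.X) * Q).coeff (m + 1) = Q.coeff (m + 1) - Q.coeff m := by
  rw [sub_mul, one_mul, Polynomial.coeff_sub, Polynomial.coeff_X_mul]

lemma coeff_one_add_X_mul (Q : Polynomial ℝ) (m : ℕ) :
    ((1 + Polynomial.X) * Q).coeff (m + 1) = Q.coeff (m + 1) + Q.coeff m := by
  rw [add_mul, one_mul, Polynomial.coeff_add, Polynomial.coeff_X_mul]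

lemma coeff_pow_big (j m : ℕ) (h : j < m) :
    ((1 + Polynomial.X : Polynomial ℝ) ^ j).coeff m = 0 := by
  apply Polynomial.coeff_eq_zero_of_natDegree_lt
  calc ((1 + Polynomial.X : Polynomial ℝ) ^ j).natDegree
      ≤ j * (1 + Polynomial.X : Polynomial ℝ).natDegree := Polynomial.natDegree_pow_le
    _ ≤ j * 1 := by
        apply Nat.mul_le_mul_left
        rw [add_comm]
        exact (Polynomial.natDegree_X_add_C (1:ℝ)).le
    _ < m := by omega

lemma Af_empty (b : Bool) {x : ℤ} {n : ℕ} (h : pathsTo x n = ∅) : Af b x n = 0 := by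
  rw [Af, h]
  simp

lemma base_true : Af true 1 1 = 1 := by
  have hset : (pathsTo 1 1).filter
      (fun d => ∃ h : 0 < 1, d ⟨1 - 1, Nat.sub_lt h one_pos⟩ = true)
      = {(fun _ => true : Fin 1 → Bool)} := by decide
  rw [Af, hset, Finset.sum_singleton]
  have ht : turns (fun _ : Fin 1 => true) = 0 := by decide
  rw [ht, pow_zero]

lemma base_false : Af false 1 1 = 0 := by
  have hset : (pathsTo 1 1).filter
      (fun d => ∃ h : 0 < 1, d ⟨1 - 1, Nat.sub_lt h one_pos⟩ = false)
      = ∅ := by decide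
  rw [Af, hset, Finset.sum_empty]

lemma neg_I_mul_neg_I (c : ℂ) : -Complex.I * (-Complex.I * c) = -c := by
  have h := Complex.I_mul_I
  ring_nf
  rw [Complex.I_sq]
  ring

lemma main_ind : ∀ n : ℕ, 1 ≤ n → ∀ k : ℤ,
    Af true (2*k - n) n = tgtA k n ∧ Af false (2*k - n) n = tgtB k n := by
  intro n
  induction n with
  | zero => omega
  | succ n ih =>
    intro _ k
    by_cases hn : n = 0
    · -- base case n + 1 = 1
      subst hn
      by_cases hk : k = 1
      · subst hk
        refine ⟨?_, ?_⟩
        · show Af true 1 1 = tgtA 1 1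
          rw [base_true, tgtA]
          norm_num
        · show Af false 1 1 = tgtB 1 1
          rw [base_false, tgtB]
          rw [if_neg (by omega)]
      · have hemp : pathsTo (2*k - (1:ℕ)) 1 = ∅ := pathsTo_eq_empty (by omega)
        refine ⟨?_, ?_⟩
        · rw [Af_empty true hemp, tgtA, if_neg (by omega),
            if_neg (by omega)]
        · rw [Af_empty false hemp, tgtB, if_neg (by omega)]
    · have hn1 : 1 ≤ n := by omega
      have ihA := fun k => (ih hn1 k).1
      have ihB := fun k => (ih hn1 k).2
      constructor
      · -- A part
        rw [Af_succ true _ n (by omega)]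
        have hx : 2*k - ((n:ℤ)+1) - (if true then 1 else -1) = 2*(k-1) - n := by
          simp; omega
        rw [show ((n+1:ℕ):ℤ) = (n:ℤ)+1 by push_cast; ring, hx]
        show Af true _ n + -Complex.I * Af false _ n = tgtA k (n+1)
        rw [ihA (k-1), ihB (k-1)]
        rcases lt_trichotomy k 1 with hk | hk | hk
        · -- k ≤ 0
          rw [tgtA, tgtB, tgtA, if_neg (by omega), if_neg (by omega),
            if_neg (by omega), if_neg (by omega),
            if_neg (by omega)]
          ring
        · -- k = 1
          subst hk
          rw [tgtA, tgtB, tgtA, if_neg (by omega), if_neg (by omega),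
            if_neg (by omega), if_neg (by omega),
            if_pos (by omega)]
          rw [CP]
          have e1 : ((n:ℤ) + 1 - 1 - 1).toNat = n - 1 := by omega
          have e2 : ((1:ℤ) - 1).toNat = 0 := by omega
          have e3 : ((n:ℤ) + 1 - 1).toNat = n := by omega
          rw [show ((n+1:ℕ):ℤ) = (n:ℤ)+1 by push_cast; ring, e1, e2, e3, pow_zero,
            mul_one, coeff_pow_big (n-1) n (by omega)]
          norm_num
        · rcases lt_trichotomy k ((n:ℤ)+1) with hk2 | hk2 | hk2
          · -- 2 ≤ k ≤ n
            obtain ⟨p, hp⟩ : ∃ p:ℕ, k = (p:ℤ) + 2 := ⟨(k-2).toNat, by omega⟩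
            obtain ⟨q, hq⟩ : ∃ q:ℕ, (n:ℤ) = k + q := ⟨(n-k).toNat, by omega⟩
            rw [tgtA, tgtB, tgtA, if_neg (by omega), if_pos (by omega),
              if_pos (by omega), if_neg (by omega),
              if_pos (by omega)]
            rw [CP, CP]
            have e1 : ((n:ℤ) - (k-1) - 1).toNat = q := by omega
            have e2 : (k - 1 - 1).toNat = p := by omega
            have e3 : ((n:ℤ) - (k-1)).toNat = q + 1 := by omega
            have e4 : ((n:ℤ) - (k-1) - 1).toNat = q := by omega
            have e5 : ((n:ℤ) + 1 - k - 1).toNat = q := by omega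
            have e6 : (k - 1).toNat = p + 1 := by omega
            have e7 : ((n:ℤ) + 1 - k).toNat = q + 1 := by omega
            rw [show ((n+1:ℕ):ℤ) = (n:ℤ)+1 by push_cast; ring, e1, e2, e3, e5, e6, e7]
            rw [neg_I_mul_neg_I]
            have hpoly : ((1 + Polynomial.X : Polynomial ℝ) ^ q * (1 - Polynomial.X) ^ (p+1))
                = (1 - Polynomial.X) * ((1 + Polynomial.X) ^ q * (1 - Polynomial.X) ^ p) := by
              ring
            rw [hpoly, coeff_one_sub_X_mul]
            push_cast
            ring
          · -- k = n + 1
            rw [tgtA, tgtB, tgtA, if_pos (by omega), if_neg (by omega),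
              if_pos (by omega)]
            ring
          · -- k ≥ n + 2
            rw [tgtA, tgtB, tgtA, if_neg (by omega), if_neg (by omega),
              if_neg (by omega), if_neg (by omega),
              if_neg (by omega)]
            ring
      · -- B part
        rw [Af_succ false _ n (by omega)]
        have hx : 2*k - ((n:ℤ)+1) - (if false then 1 else -1) = 2*k - n := by
          simp; omega
        rw [show ((n+1:ℕ):ℤ) = (n:ℤ)+1 by push_cast; ring, hx]
        show Af false _ n + -Complex.I * Af true _ n = tgtB k (n+1)
        rw [ihA k, ihB k]
        by_cases hk0 : k < 1
        · rw [tgtB, tgtA, tgtB, if_neg (by omega), if_neg (by omega),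
            if_neg (by omega), if_neg (by omega)]
          ring
        · by_cases hkn : (n:ℤ) < k
          · rw [tgtB, tgtA, tgtB, if_neg (by omega), if_neg (by omega),
              if_neg (by omega), if_neg (by omega)]
            ring
          · by_cases hke : k = (n:ℤ)
            · subst hke
              rw [tgtB, tgtA, tgtB, if_neg (by omega), if_pos rfl, if_pos (by omega)]
              rw [CP]
              have e1 : (((n:ℕ):ℤ) + 1 - ((n:ℕ):ℤ) - 1).toNat = 0 := by omega
              rw [show ((n+1:ℕ):ℤ) = ((n:ℕ):ℤ)+1 by push_cast; ring, e1]
              have hc : ((1 + Polynomial.X : Polynomial ℝ) ^ 0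
                  * (1 - Polynomial.X) ^ (((n:ℕ):ℤ) - 1).toNat).coeff 0 = 1 := by
                rw [Polynomial.coeff_zero_eq_eval_zero]
                simp
              rw [hc]
              push_cast
              ring
            · -- 1 ≤ k ≤ n - 1
              obtain ⟨p, hp⟩ : ∃ p:ℕ, k = (p:ℤ) + 1 := ⟨(k-1).toNat, by omega⟩
              obtain ⟨q, hq⟩ : ∃ q:ℕ, (n:ℤ) = k + q + 1 := ⟨(n-k-1).toNat, by omega⟩
              rw [tgtB, tgtA, tgtB, if_pos (by omega), if_neg (by omega),
                if_pos (by omega), if_pos (by omega)]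
              rw [CP, CP]
              have e1 : ((n:ℤ) - k - 1).toNat = q := by omega
              have e2 : (k - 1).toNat = p := by omega
              have e3 : ((n:ℤ) - k).toNat = q + 1 := by omega
              have e4 : ((n:ℤ) + 1 - k - 1).toNat = q + 1 := by omega
              rw [show ((n+1:ℕ):ℤ) = ((n:ℕ):ℤ)+1 by push_cast; ring, e1, e2, e3, e4]
              have hpoly : ((1 + Polynomial.X : Polynomial ℝ) ^ (q+1) * (1 - Polynomial.X) ^ p)
                  = (1 + Polynomial.X) * ((1 + Polynomial.X) ^ q * (1 - Polynomial.X) ^ p) := by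
                ring
              rw [hpoly, coeff_one_add_X_mul]
              push_cast
              ring

lemma Af_total (x : ℤ) (n : ℕ) (hn : 0 < n) :
    ∑ d ∈ pathsTo x n, (-Complex.I) ^ turns d = Af true x n + Af false x n := by
  rw [Af, Af,
    ← Finset.sum_filter_add_sum_filter_not (pathsTo x n)
      (fun d => ∃ h : 0 < n, d ⟨n - 1, Nat.sub_lt h one_pos⟩ = true)]
  congr 1
  refine Finset.sum_congr (Finset.filter_congr ?_) (fun _ _ => rfl)
  intro d hd
  constructor
  · intro hne
    refine ⟨hn, ?_⟩
    cases hb : d ⟨n - 1, Nat.sub_lt hn one_pos⟩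
    · rfl
    · exact absurd ⟨hn, hb⟩ hne
  · rintro ⟨hp, hq⟩ hne
    obtain ⟨hp', hq'⟩ := hne
    rw [hq'] at hq
    simp at hq


/-- a1(-t+2k,t) and a2(-t+2k,t) are coefficients of 2^((1-t)/2)(1+z)^(t-k-1)(1-z)^(k-1). -/
theorem coefficients_of_polynomial (t k : ℤ) (h1 : 1 ≤ k) (h2 : k ≤ t - 1) :
    (a (-t + 2 * k) t).re =
      (Polynomial.C ((2 : ℝ) ^ (((1 : ℝ) - t) / 2)) *
        (1 + Polynomial.X) ^ (t - k - 1).toNat *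
        (1 - Polynomial.X) ^ (k - 1).toNat).coeff (t - k - 1).toNat ∧
    (a (-t + 2 * k) t).im =
      (Polynomial.C ((2 : ℝ) ^ (((1 : ℝ) - t) / 2)) *
        (1 + Polynomial.X) ^ (t - k - 1).toNat *
        (1 - Polynomial.X) ^ (k - 1).toNat).coeff (t - k).toNat := by
  have ht : 2 ≤ t := by omega
  set n := t.toNat with hdefn
  have hn : (n:ℤ) = t := Int.toNat_of_nonneg (by omega)
  have hpos : 0 < n := by omega
  set r : ℝ := (2 : ℝ) ^ (((1 : ℝ) - t) / 2) with hr
  set c0 : ℝ := (CP n k).coeff ((n:ℤ) - k - 1).toNat with hc0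
  set c1 : ℝ := (CP n k).coeff ((n:ℤ) - k).toNat with hc1
  have h2c : ((r : ℝ) : ℂ) = (2:ℂ) ^ ((1 - (t:ℂ))/2) := by
    rw [hr, Complex.ofReal_cpow (by norm_num : (0:ℝ) ≤ 2)]
    push_cast
    norm_num
  have hx : -t + 2*k = 2*k - (n:ℤ) := by omega
  have hsum : ∑ d ∈ pathsTo (-t + 2*k) t.toNat, (-Complex.I) ^ turns d
      = (c1 : ℂ) + -Complex.I * (c0 : ℂ) := by
    rw [← hdefn, hx, Af_total _ n hpos, (main_ind n (by omega) k).1,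
      (main_ind n (by omega) k).2, tgtA, tgtB, if_neg (by omega),
      if_pos (by omega), if_pos (by omega)]
  have ha : a (-t + 2*k) t = ((r * c0 : ℝ) : ℂ) + ((r * c1 : ℝ) : ℂ) * Complex.I := by
    rw [a, hsum, ← h2c]
    push_cast
    have : Complex.I * -Complex.I = 1 := by
      rw [mul_neg, Complex.I_mul_I]; norm_num
    calc (r:ℂ) * Complex.I * ((c1:ℂ) + -Complex.I * (c0:ℂ))
        = (r:ℂ) * (c0:ℂ) * (Complex.I * -Complex.I) + (r:ℂ) * (c1:ℂ) * Complex.I := by ring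
      _ = (r:ℂ) * (c0:ℂ) + (r:ℂ) * (c1:ℂ) * Complex.I := by rw [this]; ring
  have hcoeff : ∀ m : ℕ,
      (Polynomial.C r * (1 + Polynomial.X) ^ (t - k - 1).toNat *
        (1 - Polynomial.X) ^ (k - 1).toNat).coeff m = r * (CP n k).coeff m := by
    intro m
    rw [CP, hn, mul_assoc, Polynomial.coeff_C_mul]
  have hre : (a (-t + 2*k) t).re = r * c0 := by
    rw [ha]; simp
  have him : (a (-t + 2*k) t).im = r * c1 := by
    rw [ha]; simp
  refine ⟨?_, ?_⟩
  · rw [hre, hcoeff, hc0, hn]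
  · rw [him, hcoeff, hc1, hn]
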